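/- arXiv:2404.00746 — 2 statements merged into one kernel-verified Lean document; each statement's English description precedes it below -/
import Mathlib

section
/- Let DB be an uncertain database all of whose existential probabilities lie in [0,1], and let α and α' be patterns such that α is a sublist (subsequence) of α'. Then expSup(α') ≤ expSup(α). That is, expected support is anti-monotone with respect to the subsequence relation on patterns. -/
variable {I : Type*}

/-- An uncertain sequence: a finite list of (item, existential probability) pairs. -/
abbrev USeq (I : Type*) := List (I × ℝ)

/-- An uncertain database: a finite list of uncertain sequences. -/
abbrev UDB (I : Type*) := List (USeq I)

/-- `α` occurs in `S`: some sublist of `S` has item list `α`. -/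
def Occurs (α : List I) (S : USeq I) : Prop :=
  ∃ o : USeq I, o.Sublist S ∧ o.map Prod.fst = α

/-- Maximum occurrence probability of pattern `α` in `S`
(`0` if `α` has no occurrence in `S`; `1` for the empty pattern). -/
noncomputable def maxPrS [DecidableEq I] (α : List I) (S : USeq I) : ℝ :=
  WithBot.unbotD 0 (((S.sublists.filter fun o => decide (o.map Prod.fst = α)).map
      fun o => (o.map Prod.snd).prod).maximum)

/-- Greedy projection: `projSeq α S = some S'` iff `α` occurs in `S`, in which case `S'`
is the suffix of `S` strictly after the last matched position of the greedy (leftmost)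
occurrence of `α` in `S`.  For the empty pattern it is `S` itself. -/
def projSeq [DecidableEq I] : List I → USeq I → Option (USeq I)
  | [], S => some S
  | _ :: _, [] => none
  | i :: α, (x, _) :: rest =>
      if x = i then projSeq α rest else projSeq (i :: α) rest

/-- The projected database `DB|α`. -/
def projDB [DecidableEq I] (α : List I) (DB : UDB I) : UDB I :=
  DB.filterMap (projSeq α)

/-- `P̂_D(i)`: maximum probability of an entry with item `i` over all sequences of `D`
(`0` if `i` occurs in no sequence of `D`). -/
noncomputable def Phat [DecidableEq I] (D : UDB I) (i : I) : ℝ :=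
  WithBot.unbotD 0 (((D.flatten.filter fun e => decide (e.1 = i)).map Prod.snd).maximum)

/-- `maxPr(α)` relative to `DB`: the product of per-step maximum probabilities over the
successively projected databases. -/
noncomputable def maxPrDB [DecidableEq I] (DB : UDB I) (α : List I) : ℝ :=
  ∏ k : Fin α.length, Phat (projDB (α.take k.val) DB) (α.get k)

/-- Expected support of `α` in `DB`. -/
noncomputable def expSup [DecidableEq I] (DB : UDB I) (α : List I) : ℝ :=
  (DB.map fun S => maxPrS α S).sum

/-- `expSup^cap` of a nonempty pattern (junk value `0` on the empty pattern). -/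
noncomputable def expSupCap [DecidableEq I] (DB : UDB I) (α : List I) : ℝ :=
  match α.getLast? with
  | none => 0
  | some i =>
      maxPrDB DB α.dropLast *
        ((projDB α.dropLast DB).map fun S' => maxPrS [i] S').sum

/-- Number of sequences of `D` in which item `i` occurs. -/
def supCount [DecidableEq I] (D : UDB I) (i : I) : ℕ :=
  (D.filter fun S => decide (i ∈ S.map Prod.fst)).length

/-- `expSupport^top` of a nonempty pattern (junk value `0` on the empty pattern). -/
noncomputable def expSupTop [DecidableEq I] (DB : UDB I) (α : List I) : ℝ :=
  match α.getLast? with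
  | none => 0
  | some i =>
      maxPrDB DB α.dropLast * Phat (projDB α.dropLast DB) i *
        (supCount (projDB α.dropLast DB) i : ℝ)

/-- Item `i` occurs in some sequence of `D`. -/
def ItemOccursIn (D : UDB I) (i : I) : Prop :=
  ∃ S ∈ D, i ∈ S.map Prod.fst

/-- `sWeight`: average weight of the items of a pattern. -/
noncomputable def sWeight (w : I → ℝ) (α : List I) : ℝ :=
  (α.map w).sum / (α.length : ℝ)

/-- Maximum weight among the items of a pattern (`0` for the empty pattern). -/
noncomputable def mxWs (w : I → ℝ) (α : List I) : ℝ :=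
  WithBot.unbotD 0 ((α.map w).maximum)

/-- Maximum weight among items occurring in some sequence of `D` (`0` if none). -/
noncomputable def mxWDB (w : I → ℝ) (D : UDB I) : ℝ :=
  WithBot.unbotD 0 ((D.flatten.map fun e => w e.1).maximum)

/-- `wgt^cap`. -/
noncomputable def wgtCap [DecidableEq I] (DB : UDB I) (w : I → ℝ) (α : List I) : ℝ :=
  max (mxWDB w (projDB α.dropLast DB)) (mxWs w α)

/-- Weighted expected support. -/
noncomputable def WES [DecidableEq I] (DB : UDB I) (w : I → ℝ) (α : List I) : ℝ :=
  expSup DB α * sWeight w α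

/-- `wExpSup^cap`. -/
noncomputable def wExpSupCap [DecidableEq I] (DB : UDB I) (w : I → ℝ) (α : List I) : ℝ :=
  expSupCap DB α * wgtCap DB w α

theorem List.Sublist.prod_le_prod_of_mem_Icc {R : Type*} [CommSemiring R] [PartialOrder R]
    [IsOrderedRing R] {l₁ l₂ : List R} (h : l₁.Sublist l₂) (hl : ∀ a ∈ l₂, a ∈ Set.Icc (0 : R) 1) :
    l₂.prod ≤ l₁.prod := by
  induction h with
  | slnil => rfl
  | cons a _ ih =>
    simp only [List.prod_cons, List.forall_mem_cons] at hl ⊢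
    have hprod := List.prod_nonneg fun b hb => (hl.2 b hb).1
    exact (mul_le_of_le_one_left hprod hl.1.2).trans (ih hl.2)
  | cons_cons a _ ih =>
    simp only [List.prod_cons, List.forall_mem_cons] at hl ⊢
    exact mul_le_mul_of_nonneg_left (ih hl.2) hl.1.1

section maxPrS

variable [DecidableEq I] {α α' : List I} {S : USeq I}

theorem maxPrS_nonneg (hS : ∀ e ∈ S, 0 ≤ e.2) : 0 ≤ maxPrS α S := by
  unfold maxPrS
  cases hmax : ((S.sublists.filter fun o => decide (o.map Prod.fst = α)).map
      fun o => (o.map Prod.snd).prod).maximum with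
  | bot => rfl
  | coe m =>
    obtain ⟨o, ho, rfl⟩ := List.mem_map.1 (List.maximum_mem hmax)
    have hoS : o.Sublist S := List.mem_sublists.1 (List.mem_filter.1 ho).1
    exact List.prod_nonneg fun p hp => by
      obtain ⟨e, he, rfl⟩ := List.mem_map.1 hp
      exact hS e (hoS.subset he)

theorem le_maxPrS {o : USeq I} (hoS : o.Sublist S) (hoα : o.map Prod.fst = α) :
    (o.map Prod.snd).prod ≤ maxPrS α S := by
  have hmem : (o.map Prod.snd).prod ∈ (S.sublists.filter fun o => decide (o.map Prod.fst = α)).map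
      fun o => (o.map Prod.snd).prod :=
    List.mem_map.2 ⟨o, List.mem_filter.2 ⟨List.mem_sublists.2 hoS, decide_eq_true hoα⟩, rfl⟩
  unfold maxPrS
  rw [WithBot.le_unbotD_iff (List.maximum_ne_bot_of_ne_nil (List.ne_nil_of_mem hmem))]
  exact List.le_maximum_of_mem' hmem

theorem maxPrS_le {c : ℝ} (hc : 0 ≤ c)
    (h : ∀ o : USeq I, o.Sublist S → o.map Prod.fst = α → (o.map Prod.snd).prod ≤ c) :
    maxPrS α S ≤ c := by
  unfold maxPrS
  rw [WithBot.unbotD_le_iff fun _ => hc]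
  refine List.maximum_le_of_forall_le fun p hp => ?_
  obtain ⟨o, ho, rfl⟩ := List.mem_map.1 hp
  obtain ⟨hoS, hoα⟩ := List.mem_filter.1 ho
  exact WithBot.coe_le_coe.2 (h o (List.mem_sublists.1 hoS) (of_decide_eq_true hoα))

/-- An occurrence of `α'` contains an occurrence of its subpattern `α`, made of fewer factors
from `[0, 1]`. -/
theorem maxPrS_anti_of_sublist (hS : ∀ e ∈ S, e.2 ∈ Set.Icc (0 : ℝ) 1) (h : α.Sublist α') :
    maxPrS α' S ≤ maxPrS α S := by
  refine maxPrS_le (maxPrS_nonneg fun e he => (hS e he).1) fun o' ho'S ho'α => ?_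
  obtain ⟨o, hoo', hoα⟩ := List.sublist_map_iff.1 (ho'α ▸ h)
  calc (o'.map Prod.snd).prod ≤ (o.map Prod.snd).prod :=
        (hoo'.map Prod.snd).prod_le_prod_of_mem_Icc fun p hp => by
          obtain ⟨e, he, rfl⟩ := List.mem_map.1 hp
          exact hS e (ho'S.subset he)
    _ ≤ maxPrS α S := le_maxPrS (hoo'.trans ho'S) hoα.symm

end maxPrS

/-- If all probabilities of `DB` lie in `[0,1]` and `α` is a sublist (subsequence) of
`α'`, then `expSup(α') ≤ expSup(α)`: expected support is anti-monotone w.r.t. the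
subsequence relation on patterns. -/
theorem expSup_anti_of_sublist [DecidableEq I]
    (DB : UDB I) (hp : ∀ S ∈ DB, ∀ e ∈ S, e.2 ∈ Set.Icc (0 : ℝ) 1)
    (α α' : List I) (h : α.Sublist α') :
    expSup DB α' ≤ expSup DB α :=
  List.sum_le_sum fun S hS => maxPrS_anti_of_sublist (hp S hS) h
end

section
/- Let DB be an uncertain database, with each item x carrying a weight w(x) ∈ [0,1]. Let α be a nonempty pattern and α' = α ++ β with β nonempty, where every item of β occurs in some sequence of the projected database DB|α. Then wgt^cap(α') ≤ wgt^cap(α); that is, the weight cap is anti-monotone along prefix extensions by items of the projected database. -/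
variable {I : Type*}

/-!
Greedy projection along `γ ++ δ` first projects along `γ` and then projects the resulting
suffixes along `δ`, so the entries of `DB|(γ ++ δ)` are among those of `DB|γ`. Both
`(α ++ β).dropLast` and `α` extend `α.dropLast`, so the weights entering `wgt^cap(α ++ β)` —
those of `DB|(α ++ β).dropLast`, of `α`, and of the items of `β` (which lie in `DB|α`) — are
all bounded by `wgt^cap(α)`. Nonnegativity of the weights handles the junk value `0` of an
empty maximum.
-/

lemma List.dropLast_prefix_dropLast_append {α : Type*} (l₁ l₂ : List α) :
    l₁.dropLast <+: (l₁ ++ l₂).dropLast := by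
  rw [List.dropLast_append]
  split
  · exact List.prefix_refl _
  · exact (List.dropLast_prefix l₁).trans (List.prefix_append _ _)

section unbotDMaximum

variable {α : Type*} [LinearOrder α] {l : List α} {a c d : α}

lemma List.le_unbotD_maximum_of_mem (ha : a ∈ l) : a ≤ l.maximum.unbotD d :=
  WithBot.le_unbotD (List.le_maximum_of_mem' ha)

lemma List.unbotD_maximum_le (hd : d ≤ c) (h : ∀ a ∈ l, a ≤ c) : l.maximum.unbotD d ≤ c :=
  (WithBot.unbotD_le_iff fun _ => hd).2 <|
    List.maximum_le_of_forall_le fun a ha => WithBot.coe_le_coe.2 (h a ha)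

end unbotDMaximum

section projection

variable [DecidableEq I]

lemma projSeq_suffix : ∀ (γ : List I) (S S' : USeq I), projSeq γ S = some S' → S' <:+ S
  | [], S, S', h => by simp only [projSeq, Option.some.injEq] at h; simp [h]
  | _ :: _, [], _, h => by simp [projSeq] at h
  | i :: γ, (x, _) :: rest, S', h => by
    rw [projSeq] at h
    split_ifs at h
    · exact (projSeq_suffix γ rest S' h).trans (List.suffix_cons _ _)
    · exact (projSeq_suffix (i :: γ) rest S' h).trans (List.suffix_cons _ _)

lemma projSeq_append :
    ∀ (γ δ : List I) (S : USeq I), projSeq (γ ++ δ) S = (projSeq γ S).bind (projSeq δ)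
  | [], δ, S => by simp [projSeq]
  | _ :: _, δ, [] => by simp [projSeq]
  | i :: γ, δ, (x, _) :: rest => by
    rw [List.cons_append, projSeq, projSeq]
    split_ifs
    · exact projSeq_append γ δ rest
    · exact projSeq_append (i :: γ) δ rest

lemma flatten_projDB_subset_of_prefix (DB : UDB I) {γ γ' : List I} (h : γ <+: γ') :
    (projDB γ' DB).flatten ⊆ (projDB γ DB).flatten := by
  obtain ⟨δ, rfl⟩ := h
  intro e he
  simp only [List.mem_flatten, projDB, List.mem_filterMap] at he ⊢
  obtain ⟨S', ⟨S, hS, hproj⟩, heS'⟩ := he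
  rw [projSeq_append] at hproj
  obtain ⟨T, hT, hTS'⟩ := Option.bind_eq_some_iff.1 hproj
  exact ⟨T, ⟨S, hS, hT⟩, (projSeq_suffix δ T S' hTS').subset heS'⟩

end projection

section weights

variable {w : I → ℝ}

lemma le_mxWs {α : List I} {i : I} (hi : i ∈ α) : w i ≤ mxWs w α :=
  List.le_unbotD_maximum_of_mem (List.mem_map_of_mem hi)

lemma mxWs_nonneg (hw : ∀ x, 0 ≤ w x) (α : List I) : 0 ≤ mxWs w α := by
  cases α with
  | nil => simp [mxWs]
  | cons i _ => exact (hw i).trans (le_mxWs List.mem_cons_self)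

lemma mxWs_le {α : List I} {c : ℝ} (hc : 0 ≤ c) (h : ∀ i ∈ α, w i ≤ c) :
    mxWs w α ≤ c :=
  List.unbotD_maximum_le hc <| List.forall_mem_map.2 h

lemma le_mxWDB {D : UDB I} {e : I × ℝ} (he : e ∈ D.flatten) : w e.1 ≤ mxWDB w D :=
  List.le_unbotD_maximum_of_mem (List.mem_map_of_mem he)

lemma le_mxWDB_of_itemOccursIn {D : UDB I} {i : I} (hi : ItemOccursIn D i) :
    w i ≤ mxWDB w D := by
  obtain ⟨S, hS, hiS⟩ := hi
  obtain ⟨e, heS, rfl⟩ := List.mem_map.1 hiS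
  exact le_mxWDB (List.mem_flatten.2 ⟨S, hS, heS⟩)

lemma mxWDB_le {D : UDB I} {c : ℝ} (hc : 0 ≤ c) (h : ∀ e ∈ D.flatten, w e.1 ≤ c) :
    mxWDB w D ≤ c :=
  List.unbotD_maximum_le hc <| List.forall_mem_map.2 h

lemma mxWDB_nonneg (hw : ∀ x, 0 ≤ w x) (D : UDB I) : 0 ≤ mxWDB w D := by
  cases hD : D.flatten with
  | nil => simp [mxWDB, hD]
  | cons e _ => exact (hw e.1).trans (le_mxWDB (hD ▸ List.mem_cons_self))

lemma mxWDB_mono (hw : ∀ x, 0 ≤ w x) {D D' : UDB I} (h : D'.flatten ⊆ D.flatten) :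
    mxWDB w D' ≤ mxWDB w D :=
  mxWDB_le (mxWDB_nonneg hw D) fun _ he => le_mxWDB (h he)

end weights

theorem wgtCap_anti_general [DecidableEq I]
    (DB : UDB I) (w : I → ℝ) (hw : ∀ x : I, w x ∈ Set.Icc (0 : ℝ) 1)
    (α β : List I)
    (hβocc : ∀ i ∈ β, ItemOccursIn (projDB α DB) i) :
    wgtCap DB w (α ++ β) ≤ wgtCap DB w α := by
  have hw₀ : ∀ x, 0 ≤ w x := fun x => (hw x).1
  have hα : mxWDB w (projDB α DB) ≤ mxWDB w (projDB α.dropLast DB) :=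
    mxWDB_mono hw₀ (flatten_projDB_subset_of_prefix DB (List.dropLast_prefix α))
  have hcap₀ : 0 ≤ wgtCap DB w α := (mxWs_nonneg hw₀ α).trans (le_max_right _ _)
  have hαβ : mxWDB w (projDB (α ++ β).dropLast DB) ≤ mxWDB w (projDB α.dropLast DB) :=
    mxWDB_mono hw₀ <|
      flatten_projDB_subset_of_prefix DB (List.dropLast_prefix_dropLast_append α β)
  refine max_le (hαβ.trans (le_max_left _ _)) (mxWs_le hcap₀ fun i hi => ?_)
  rcases List.mem_append.1 hi with hiα | hiβ
  · exact (le_mxWs hiα).trans (le_max_right _ _)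
  · exact ((le_mxWDB_of_itemOccursIn (hβocc i hiβ)).trans hα).trans (le_max_left _ _)

/-- If all weights lie in `[0,1]`, `α` is nonempty, `β` is nonempty and every item of `β`
occurs in some sequence of `DB|α`, then `wgt^cap(α ++ β) ≤ wgt^cap(α)`. -/
theorem wgtCap_anti [DecidableEq I]
    (DB : UDB I) (w : I → ℝ) (hw : ∀ x : I, w x ∈ Set.Icc (0 : ℝ) 1)
    (α β : List I) (hα : α ≠ []) (hβ : β ≠ [])
    (hβocc : ∀ i ∈ β, ItemOccursIn (projDB α DB) i) :
    wgtCap DB w (α ++ β) ≤ wgtCap DB w α :=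
  wgtCap_anti_general DB w hw α β hβocc
end
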